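/- Let H : E → ℝ be smooth and let ζ(t,q,p) = (τ(t,q,p), ξ(t,q,p), η(t,q,p)) be a smooth vector field on E. Then L_ζ α_H = 0 (ζ is a Noether symmetry) if and only if for all (t,q,p) ∈ E and all j = 1,…,n: (u1) Σᵢ pᵢ ∂ξⁱ/∂pⱼ − H ∂τ/∂pⱼ = 0; (u2) ηʲ + Σᵢ pᵢ ∂ξⁱ/∂qⱼ − H ∂τ/∂qⱼ = 0; and (u3) Σᵢ (pᵢ ∂ξⁱ/∂t − ηⁱ ∂H/∂pᵢ − ξⁱ ∂H/∂qᵢ) − H ∂τ/∂t − τ ∂H/∂t = 0. -/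

import Mathlib

/-!
`L_ζ α_H (x)` is a linear functional on `E`, so it vanishes iff it vanishes on the coordinate
vectors `∂_t, ∂_{q_j}, ∂_{p_j}`. Since `Dα_H(x)(u)(v) = ∑ᵢ uₚᵢ v_qᵢ − DH(x)(u) v_t`, the term
`Dα_H(x)(ζ)` contributes `ηʲ` on `∂_{q_j}`, nothing on `∂_{p_j}` and `−DH(x)(ζ)` on `∂_t`, while
`α_H(x)(Dζ(x) v)` contributes the derivatives of `ξ` and `τ`: the three evaluations are
(u2), (u1) and (u3).
-/

noncomputable section
open scoped ContDiff

/-- The extended phase space `E = ℝ × ℝⁿ × ℝⁿ`, with points `x = (t, q, p)`. -/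
abbrev EE (n : ℕ) : Type := ℝ × (Fin n → ℝ) × (Fin n → ℝ)

/-- The Poincaré–Cartan 1-form `α_H = p dq − H dt`:
`α_H(x)(τ̂, ξ̂, η̂) = ∑ i, pᵢ ξ̂ᵢ − H(x) τ̂`. -/
def pcForm {n : ℕ} (H : EE n → ℝ) (x : EE n) : EE n →L[ℝ] ℝ :=
  (∑ i, x.2.2 i • ((ContinuousLinearMap.proj i).comp
      ((ContinuousLinearMap.fst ℝ (Fin n → ℝ) (Fin n → ℝ)).comp
        (ContinuousLinearMap.snd ℝ ℝ ((Fin n → ℝ) × (Fin n → ℝ))))))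
    - H x • ContinuousLinearMap.fst ℝ ℝ ((Fin n → ℝ) × (Fin n → ℝ))

/-- The vector field `Z_H(x) = (1, ∂H/∂p(x), −∂H/∂q(x))` of Hamilton's equations. -/
def ZH {n : ℕ} (H : EE n → ℝ) (x : EE n) : EE n :=
  (1, fun i => fderiv ℝ H x (0, 0, Pi.single i 1),
      fun i => - fderiv ℝ H x (0, Pi.single i 1, 0))

/-- The Lie derivative of a 1-form `α` along a vector field `ζ`:
`(L_ζ α)(x)(v) = (Dα(x)(ζ(x)))(v) + α(x)(Dζ(x)(v))`. -/
def lieDeriv {n : ℕ} (ζ : EE n → EE n) (α : EE n → (EE n →L[ℝ] ℝ)) (x : EE n) :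
    EE n →L[ℝ] ℝ :=
  fderiv ℝ α x (ζ x) + (α x).comp (fderiv ℝ ζ x)

/-- The exterior derivative of a 1-form:
`dα(x)(u,v) = (Dα(x)u)(v) − (Dα(x)v)(u)`. -/
def extDerivEE {n : ℕ} (α : EE n → (EE n →L[ℝ] ℝ)) (x u v : EE n) : ℝ :=
  fderiv ℝ α x u v - fderiv ℝ α x v u

section CoordinateExpansion

variable {R M F ι : Type*} [Semiring R] [AddCommMonoid M] [Module R M] [Fintype ι] [DecidableEq ι]
  [FunLike F (R × (ι → R) × (ι → R)) M] [LinearMapClass F R (R × (ι → R) × (ι → R)) M]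

theorem eq_coordinate_sum (v : R × (ι → R) × (ι → R)) :
    v = v.1 • ((1 : R), (0 : ι → R), (0 : ι → R))
      + ∑ j, v.2.1 j • ((0 : R), (Pi.single j 1 : ι → R), (0 : ι → R))
      + ∑ j, v.2.2 j • ((0 : R), (0 : ι → R), (Pi.single j 1 : ι → R)) := by
  refine Prod.ext ?_ (Prod.ext ?_ ?_)
  · simp [Prod.fst_sum]
  all_goals funext k; simp [Prod.fst_sum, Prod.snd_sum, Pi.single_apply]

theorem map_eq_coordinate_sum (L : F) (v : R × (ι → R) × (ι → R)) :
    L v = v.1 • L (1, 0, 0) + ∑ j, v.2.1 j • L (0, Pi.single j 1, 0)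
      + ∑ j, v.2.2 j • L (0, 0, Pi.single j 1) := by
  conv_lhs => rw [eq_coordinate_sum v]
  simp only [map_add, map_sum, map_smul]

theorem forall_map_eq_zero_iff (L : F) :
    (∀ v, L v = 0) ↔
      L (1, 0, 0) = 0 ∧ ∀ j, L (0, Pi.single j 1, 0) = 0 ∧ L (0, 0, Pi.single j 1) = 0 := by
  refine ⟨fun h => ⟨h _, fun j => ⟨h _, h _⟩⟩, fun ⟨ht, hqp⟩ v => ?_⟩
  simp [map_eq_coordinate_sum L v, ht, hqp]

end CoordinateExpansion

section ComponentDerivatives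

variable {𝕜 E F G ι : Type*} [NontriviallyNormedField 𝕜] [NormedAddCommGroup E]
  [NormedSpace 𝕜 E] [NormedAddCommGroup F] [NormedSpace 𝕜 F] [NormedAddCommGroup G]
  [NormedSpace 𝕜 G] [Fintype ι] {f : E → F × G} {x : E}

theorem fderiv_comp_fst_apply (hf : DifferentiableAt 𝕜 f x) (v : E) :
    fderiv 𝕜 (fun y => (f y).1) x v = (fderiv 𝕜 f x v).1 := by
  simp [fderiv.fst hf]

theorem fderiv_comp_snd_fst_apply {f : E → F × (ι → 𝕜) × G} (hf : DifferentiableAt 𝕜 f x)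
    (i : ι) (v : E) :
    fderiv 𝕜 (fun y => (f y).2.1 i) x v = (fderiv 𝕜 f x v).2.1 i := by
  simp [fderiv_apply hf.snd.fst, fderiv.fst hf.snd, fderiv.snd hf]

end ComponentDerivatives

section NoetherConditions

variable {n : ℕ} {H : EE n → ℝ} {ζ : EE n → EE n} {x : EE n}

theorem pcForm_apply (v : EE n) :
    pcForm H x v = ∑ i, x.2.2 i * v.2.1 i - H x * v.1 := by
  simp [pcForm]

theorem fderiv_pcForm_apply (hH : DifferentiableAt ℝ H x) (u v : EE n) :
    fderiv ℝ (pcForm H) x u v = ∑ i, u.2.2 i * v.2.1 i - fderiv ℝ H x u * v.1 := by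
  let fst : EE n →L[ℝ] ℝ := ContinuousLinearMap.fst ℝ ℝ _
  let q (i : Fin n) : EE n →L[ℝ] ℝ := (ContinuousLinearMap.proj i).comp
    ((ContinuousLinearMap.fst ℝ _ _).comp (ContinuousLinearMap.snd ℝ ℝ _))
  let p (i : Fin n) : EE n →L[ℝ] ℝ := (ContinuousLinearMap.proj i).comp
    ((ContinuousLinearMap.snd ℝ _ _).comp (ContinuousLinearMap.snd ℝ ℝ _))
  have hpc : HasFDerivAt (pcForm H)
      ((∑ i, (p i).smulRight (q i)) - (fderiv ℝ H x).smulRight fst) x :=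
    (HasFDerivAt.fun_sum fun i _ => (p i).hasFDerivAt.smul_const (q i)).sub
      (hH.hasFDerivAt.smul_const fst)
  simp [hpc.fderiv, p, q, fst]

theorem lieDeriv_pcForm_apply (hH : DifferentiableAt ℝ H x) (v : EE n) :
    lieDeriv ζ (pcForm H) x v =
      ∑ i, (ζ x).2.2 i * v.2.1 i - fderiv ℝ H x (ζ x) * v.1 + pcForm H x (fderiv ℝ ζ x v) := by
  simp [lieDeriv, fderiv_pcForm_apply hH]

theorem lieDeriv_pcForm_apply_momentum (hH : DifferentiableAt ℝ H x)
    (hζ : DifferentiableAt ℝ ζ x) (j : Fin n) :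
    lieDeriv ζ (pcForm H) x (0, 0, Pi.single j 1) =
      (∑ i, x.2.2 i * fderiv ℝ (fun y => (ζ y).2.1 i) x (0, 0, Pi.single j 1))
        - H x * fderiv ℝ (fun y => (ζ y).1) x (0, 0, Pi.single j 1) := by
  simp [lieDeriv_pcForm_apply hH, pcForm_apply, fderiv_comp_fst_apply hζ,
    fderiv_comp_snd_fst_apply hζ]

theorem lieDeriv_pcForm_apply_position (hH : DifferentiableAt ℝ H x)
    (hζ : DifferentiableAt ℝ ζ x) (j : Fin n) :
    lieDeriv ζ (pcForm H) x (0, Pi.single j 1, 0) =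
      (ζ x).2.2 j + (∑ i, x.2.2 i * fderiv ℝ (fun y => (ζ y).2.1 i) x (0, Pi.single j 1, 0))
        - H x * fderiv ℝ (fun y => (ζ y).1) x (0, Pi.single j 1, 0) := by
  simp [lieDeriv_pcForm_apply hH, pcForm_apply, fderiv_comp_fst_apply hζ,
    fderiv_comp_snd_fst_apply hζ, Pi.single_apply]
  ring

theorem lieDeriv_pcForm_apply_time (hH : DifferentiableAt ℝ H x)
    (hζ : DifferentiableAt ℝ ζ x) :
    lieDeriv ζ (pcForm H) x (1, 0, 0) =
      (∑ i, (x.2.2 i * fderiv ℝ (fun y => (ζ y).2.1 i) x (1, 0, 0)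
          - (ζ x).2.2 i * fderiv ℝ H x (0, 0, Pi.single i 1)
          - (ζ x).2.1 i * fderiv ℝ H x (0, Pi.single i 1, 0)))
        - H x * fderiv ℝ (fun y => (ζ y).1) x (1, 0, 0)
        - (ζ x).1 * fderiv ℝ H x (1, 0, 0) := by
  simp [lieDeriv_pcForm_apply hH, pcForm_apply, fderiv_comp_fst_apply hζ,
    fderiv_comp_snd_fst_apply hζ, map_eq_coordinate_sum (fderiv ℝ H x) (ζ x),
    Finset.sum_sub_distrib]
  ring

end NoetherConditions

theorem noether_symmetry_iff_coordinate_conditions {n : ℕ} (hn : 1 ≤ n)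
    (H : EE n → ℝ) (hH : ContDiff ℝ ∞ H)
    (ζ : EE n → EE n) (hζ : ContDiff ℝ ∞ ζ) :
    (∀ x, lieDeriv ζ (pcForm H) x = 0) ↔
      (∀ x : EE n, ∀ j : Fin n,
        -- (u1):  ∑ᵢ pᵢ ∂ξⁱ/∂pⱼ − H ∂τ/∂pⱼ = 0
        ((∑ i, x.2.2 i * fderiv ℝ (fun y => (ζ y).2.1 i) x (0, 0, Pi.single j 1))
          - H x * fderiv ℝ (fun y => (ζ y).1) x (0, 0, Pi.single j 1) = 0) ∧
        -- (u2):  ηʲ + ∑ᵢ pᵢ ∂ξⁱ/∂qⱼ − H ∂τ/∂qⱼ = 0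
        ((ζ x).2.2 j + (∑ i, x.2.2 i * fderiv ℝ (fun y => (ζ y).2.1 i) x (0, Pi.single j 1, 0))
          - H x * fderiv ℝ (fun y => (ζ y).1) x (0, Pi.single j 1, 0) = 0) ∧
        -- (u3):  ∑ᵢ (pᵢ ∂ξⁱ/∂t − ηⁱ ∂H/∂pᵢ − ξⁱ ∂H/∂qᵢ) − H ∂τ/∂t − τ ∂H/∂t = 0
        ((∑ i, (x.2.2 i * fderiv ℝ (fun y => (ζ y).2.1 i) x (1, 0, 0)
            - (ζ x).2.2 i * fderiv ℝ H x (0, 0, Pi.single i 1)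
            - (ζ x).2.1 i * fderiv ℝ H x (0, Pi.single i 1, 0)))
          - H x * fderiv ℝ (fun y => (ζ y).1) x (1, 0, 0)
          - (ζ x).1 * fderiv ℝ H x (1, 0, 0) = 0)) := by
  refine forall_congr' fun x => ?_
  have hHx : DifferentiableAt ℝ H x := hH.differentiable (by simp) x
  have hζx : DifferentiableAt ℝ ζ x := hζ.differentiable (by simp) x
  rw [ContinuousLinearMap.ext_iff, ← lieDeriv_pcForm_apply_time hHx hζx]
  simp only [zero_apply, forall_map_eq_zero_iff,
    ← lieDeriv_pcForm_apply_position hHx hζx, ← lieDeriv_pcForm_apply_momentum hHx hζx]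
  -- (u3) does not involve `j`, so it is read off at `j = 0`.
  exact ⟨fun ⟨ht, hqp⟩ j => ⟨(hqp j).2, (hqp j).1, ht⟩,
    fun h => ⟨(h ⟨0, hn⟩).2.2, fun j => ⟨(h j).2.1, (h j).1⟩⟩⟩
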